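/- In SL₂(L), the root group and the torus are self-centralizing on nontrivial elements: for every nonzero t ∈ L, the centralizer of a(t) in SL₂(L) equals A; and for every s ≠ 1 in the subgroup of Kˣ generated by L \ {0}, the centralizer of diag(s) in SL₂(L) equals T(L). -/

import Mathlib

open Matrix Pointwise

noncomputable section

variable {K : Type*} [Field K]

abbrev SL2 (K : Type*) [Field K] := Matrix.SpecialLinearGroup (Fin 2) K

/-- `a(t) = [[1,t],[0,1]]`. -/
def aMat (t : K) : SL2 K :=
  ⟨!![1, t; 0, 1], by simp [Matrix.det_fin_two_of]⟩

/-- `b(t) = [[1,0],[t,1]]`. -/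
def bMat (t : K) : SL2 K :=
  ⟨!![1, 0; t, 1], by simp [Matrix.det_fin_two_of]⟩

/-- `diag(s) = [[s,0],[0,s⁻¹]]`. -/
def diagMat (s : Kˣ) : SL2 K :=
  ⟨!![(s : K), 0; 0, ((s⁻¹ : Kˣ) : K)], by simp [Matrix.det_fin_two_of]⟩

/-- `w = [[0,1],[1,0]]`, in `SL₂` since `char K = 2`. -/
def wMat (K : Type*) [Field K] [CharP K 2] : SL2 K :=
  ⟨!![0, 1; 1, 0], by simp [Matrix.det_fin_two_of, CharTwo.neg_eq]⟩

def setA (L : AddSubgroup K) : Set (SL2 K) := {g | ∃ t ∈ L, g = aMat t}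

def setAop (L : AddSubgroup K) : Set (SL2 K) := {g | ∃ t ∈ L, g = bMat t}

/-- Timmesfeld's `SL₂(L)`. -/
def SL2L (L : AddSubgroup K) : Subgroup (SL2 K) := Subgroup.closure (setA L ∪ setAop L)

/-- The subgroup of `Kˣ` generated by the nonzero elements of `L`. -/
def Tgen (L : AddSubgroup K) : Subgroup Kˣ := Subgroup.closure {u : Kˣ | (u : K) ∈ L}

def setTL (L : AddSubgroup K) : Set (SL2 K) := {g | ∃ s ∈ Tgen L, g = diagMat s}

def setTK (K : Type*) [Field K] : Set (SL2 K) := {g | ∃ s : Kˣ, g = diagMat s}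

def setB (L : AddSubgroup K) : Set (SL2 K) := setTL L * setA L

/-!
Every element of `SL₂(L)` lies in the envelope of `L`: the matrices `[[a, b], [c, d]]` whose
entries lie in `Tgen L ∪ {0}` and whose row products `a b`, `c d` and column products `a c`, `b d`
lie in `L`. The envelope contains `1`, is stable under right multiplication by `a(x)`, `x ∈ L`
(thanks to `a d + b c = 1` and `K² L ⊆ L`), and under conjugation by `w`, which turns `a(x)` into
`b(x)`. A direct computation shows that the centralizer of `a(t)` in `SL₂(K)` consists of the
`a(u)`, and that of `diag(s)`, `s ≠ 1`, of the diagonal matrices; on these the envelope condition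
says exactly `u ∈ L`, resp. that the diagonal entry lies in `Tgen L`.
-/

section Matrices

@[simp]
lemma coe_aMat (t : K) : ((aMat t : SL2 K) : Matrix (Fin 2) (Fin 2) K) = !![1, t; 0, 1] := rfl

@[simp]
lemma coe_bMat (t : K) : ((bMat t : SL2 K) : Matrix (Fin 2) (Fin 2) K) = !![1, 0; t, 1] := rfl

@[simp]
lemma coe_diagMat (s : Kˣ) :
    ((diagMat s : SL2 K) : Matrix (Fin 2) (Fin 2) K) = !![(s : K), 0; 0, ((s⁻¹ : Kˣ) : K)] :=
  rfl

@[simp]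
lemma coe_wMat [CharP K 2] : ((wMat K : SL2 K) : Matrix (Fin 2) (Fin 2) K) = !![0, 1; 1, 0] :=
  rfl

lemma aMat_mul_aMat (t u : K) : aMat t * aMat u = aMat (t + u) := by
  ext i j; fin_cases i <;> fin_cases j <;> simp [Matrix.mul_apply, add_comm]

def diagHom : Kˣ →* SL2 K where
  toFun := diagMat
  map_one' := by ext i j; fin_cases i <;> fin_cases j <;> simp
  map_mul' s r := by
    ext i j; fin_cases i <;> fin_cases j <;> simp [Matrix.mul_apply, mul_comm]

lemma mul_aMat_apply_zero (g : SL2 K) (t : K) (i : Fin 2) : (g * aMat t) i 0 = g i 0 := by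
  simp [Matrix.mul_apply, Fin.sum_univ_two]

lemma mul_aMat_apply_one (g : SL2 K) (t : K) (i : Fin 2) :
    (g * aMat t) i 1 = g i 0 * t + g i 1 := by
  simp [Matrix.mul_apply, Fin.sum_univ_two]

lemma det_fin_two_eq_one (g : SL2 K) : g 0 0 * g 1 1 - g 0 1 * g 1 0 = 1 := by
  rw [← Matrix.det_fin_two]; exact g.det_coe

lemma det_fin_two_eq_one_of_charTwo [CharP K 2] (g : SL2 K) :
    g 0 0 * g 1 1 + g 0 1 * g 1 0 = 1 := by
  rw [← CharTwo.sub_eq_add]; exact det_fin_two_eq_one g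

variable [CharP K 2]

lemma wMat_mul_self : wMat K * wMat K = 1 := by
  ext i j; fin_cases i <;> fin_cases j <;> simp [Matrix.mul_apply]

lemma wMat_mul_aMat_mul_wMat (t : K) : wMat K * aMat t * wMat K = bMat t := by
  ext i j; fin_cases i <;> fin_cases j <;> simp [Matrix.mul_apply]

lemma wMat_mul_mul_wMat_apply (g : SL2 K) (i j : Fin 2) :
    (wMat K * g * wMat K) i j = g i.rev j.rev := by
  fin_cases i <;> fin_cases j <;>
    simp [Matrix.mul_apply, Matrix.vecMul, dotProduct, Fin.sum_univ_two]

lemma aMat_mul_self (t : K) : aMat t * aMat t = 1 := by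
  ext i j; fin_cases i <;> fin_cases j <;> simp [Matrix.mul_apply, CharTwo.add_self_eq_zero]

lemma bMat_mul_self (t : K) : bMat t * bMat t = 1 := by
  ext i j; fin_cases i <;> fin_cases j <;> simp [Matrix.mul_apply, CharTwo.add_self_eq_zero]

/-- `n(t) = a(t) b(t⁻¹) a(t)` is the antidiagonal matrix with entries `t, t⁻¹`, so
`n(t) n(1) = diag(t)`. -/
lemma diagMat_eq_aMat_bMat (s : Kˣ) :
    diagMat s = aMat (s : K) * bMat (s : K)⁻¹ * aMat (s : K) * (aMat 1 * bMat 1 * aMat 1) := by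
  ext i j; fin_cases i <;> fin_cases j <;>
    simp [Matrix.mul_apply, Fin.sum_univ_two, CharTwo.add_self_eq_zero]

end Matrices

section Centralizers

lemma eq_aMat_of_commute [CharP K 2] {g : SL2 K} {t : K} (ht : t ≠ 0)
    (h : g * aMat t = aMat t * g) : g = aMat (g 0 1) := by
  have hc : g 1 0 = 0 := by
    simpa [Matrix.mul_apply, Fin.sum_univ_two, ht] using congrArg (fun m : SL2 K => m 0 0) h
  have h01 : g 0 0 * t + g 0 1 = g 0 1 + t * g 1 1 := by
    simpa [Matrix.mul_apply, Fin.sum_univ_two] using congrArg (fun m : SL2 K => m 0 1) h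
  have hd : g 1 1 = g 0 0 := mul_left_cancel₀ ht (by linear_combination -h01)
  have ha : g 0 0 = 1 := by
    rw [← CharTwo.sq_inj, one_pow, sq]
    simpa [hc, hd] using det_fin_two_eq_one_of_charTwo g
  ext i j; fin_cases i <;> fin_cases j <;> simp [ha, hc, hd]

lemma eq_diagMat_of_commute {g : SL2 K} {s : Kˣ} (hs : (s : K) ^ 2 ≠ 1)
    (h : g * diagMat s = diagMat s * g) : ∃ u : Kˣ, g = diagMat u := by
  have h01 : g 0 1 * (s : K)⁻¹ = s * g 0 1 := by
    simpa [Matrix.mul_apply, Fin.sum_univ_two] using congrArg (fun m : SL2 K => m 0 1) h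
  have h10 : g 1 0 * s = (s : K)⁻¹ * g 1 0 := by
    simpa [Matrix.mul_apply, Fin.sum_univ_two] using congrArg (fun m : SL2 K => m 1 0) h
  have hs' : (s : K)⁻¹ ≠ s := fun e => hs (by rw [sq]; nth_rw 1 [← e]; simp)
  have hb : g 0 1 = 0 := by
    have : g 0 1 * ((s : K)⁻¹ - s) = 0 := by linear_combination h01
    simpa [sub_eq_zero, hs'] using this
  have hc : g 1 0 = 0 := by
    have : g 1 0 * ((s : K)⁻¹ - s) = 0 := by linear_combination -h10
    simpa [sub_eq_zero, hs'] using this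
  have hdet : g 0 0 * g 1 1 = 1 := by simpa [hb] using det_fin_two_eq_one g
  refine ⟨⟨g 0 0, g 1 1, hdet, by rw [mul_comm, hdet]⟩, ?_⟩
  ext i j; fin_cases i <;> fin_cases j <;> simp [hb, hc]

end Centralizers

section Envelope

variable {L : AddSubgroup K}

def tgenWithZero (L : AddSubgroup K) : Set K := {x | x = 0 ∨ ∃ u ∈ Tgen L, (u : K) = x}

lemma mem_tgenWithZero_of_mem {x : K} (hx : x ∈ L) : x ∈ tgenWithZero L := by
  rcases eq_or_ne x 0 with h0 | h0
  · exact Or.inl h0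
  · exact Or.inr ⟨Units.mk0 x h0, Subgroup.subset_closure hx, rfl⟩

lemma mul_mem_tgenWithZero {x y : K} (hx : x ∈ tgenWithZero L) (hy : y ∈ tgenWithZero L) :
    x * y ∈ tgenWithZero L := by
  rcases hx with rfl | ⟨u, hu, rfl⟩
  · exact Or.inl (zero_mul y)
  rcases hy with rfl | ⟨v, hv, rfl⟩
  · exact Or.inl (mul_zero _)
  exact Or.inr ⟨u * v, mul_mem hu hv, Units.val_mul u v⟩

/-- For `a ≠ 0`, `a x + b = a (x + a⁻² (a b))` with the second factor in `L`. -/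
lemma mul_add_mem_tgenWithZero (hL : ∀ s t : K, t ∈ L → s ^ 2 * t ∈ L) {a b x : K}
    (ha : a ∈ tgenWithZero L) (hb : b ∈ tgenWithZero L) (hab : a * b ∈ L) (hx : x ∈ L) :
    a * x + b ∈ tgenWithZero L := by
  rcases eq_or_ne a 0 with rfl | h0
  · simpa using hb
  have h : a * x + b = a * (x + a⁻¹ ^ 2 * (a * b)) := by field_simp
  rw [h]
  exact mul_mem_tgenWithZero ha (mem_tgenWithZero_of_mem (L.add_mem hx (hL _ _ hab)))

def envelope (L : AddSubgroup K) : Set (SL2 K) :=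
  {g | (∀ i j, g i j ∈ tgenWithZero L) ∧ (∀ i, g i 0 * g i 1 ∈ L) ∧ ∀ j, g 0 j * g 1 j ∈ L}

lemma one_mem_envelope : (1 : SL2 K) ∈ envelope L := by
  refine ⟨fun i j => ?_, fun i => ?_, fun j => ?_⟩
  · fin_cases i <;> fin_cases j <;> simp [tgenWithZero]
  · fin_cases i <;> simp
  · fin_cases j <;> simp

lemma mem_of_aMat_mem_envelope {t : K} (h : aMat t ∈ envelope L) : t ∈ L := by
  simpa using h.2.1 0

lemma mem_Tgen_of_diagMat_mem_envelope {s : Kˣ} (h : diagMat s ∈ envelope L) : s ∈ Tgen L := by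
  obtain h0 | ⟨u, hu, hus⟩ := h.1 0 0
  · exact absurd h0 s.ne_zero
  · rwa [← Units.val_inj.1 hus]

variable [CharP K 2]

lemma mul_aMat_mem_envelope (hL : ∀ s t : K, t ∈ L → s ^ 2 * t ∈ L) {g : SL2 K}
    (hg : g ∈ envelope L) {x : K} (hx : x ∈ L) : g * aMat x ∈ envelope L := by
  obtain ⟨hent, hrow, hcol⟩ := hg
  refine ⟨fun i => Fin.forall_fin_two.2 ⟨?_, ?_⟩, fun i => ?_, Fin.forall_fin_two.2 ⟨?_, ?_⟩⟩
  · simpa [mul_aMat_apply_zero] using hent i 0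
  · simpa [mul_aMat_apply_one] using
      mul_add_mem_tgenWithZero hL (hent i 0) (hent i 1) (hrow i) hx
  · rw [mul_aMat_apply_zero, mul_aMat_apply_one,
      show g i 0 * (g i 0 * x + g i 1) = g i 0 ^ 2 * x + g i 0 * g i 1 by ring]
    exact L.add_mem (hL _ _ hx) (hrow i)
  · simpa [mul_aMat_apply_zero] using hcol 0
  · have hdet := det_fin_two_eq_one_of_charTwo g
    rw [mul_aMat_apply_one, mul_aMat_apply_one, show (g 0 0 * x + g 0 1) * (g 1 0 * x + g 1 1)
        = x ^ 2 * (g 0 0 * g 1 0) + x + g 0 1 * g 1 1 by linear_combination x * hdet]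
    exact L.add_mem (L.add_mem (hL _ _ (hcol 0)) hx) (hcol 1)

lemma wMat_mul_mul_wMat_mem_envelope {g : SL2 K} (hg : g ∈ envelope L) :
    wMat K * g * wMat K ∈ envelope L := by
  obtain ⟨hent, hrow, hcol⟩ := hg
  refine ⟨fun i j => ?_, fun i => ?_, fun j => ?_⟩ <;> simp only [wMat_mul_mul_wMat_apply]
  · exact hent _ _
  · simpa [mul_comm] using hrow i.rev
  · simpa [mul_comm] using hcol j.rev

lemma mul_bMat_mem_envelope (hL : ∀ s t : K, t ∈ L → s ^ 2 * t ∈ L) {g : SL2 K}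
    (hg : g ∈ envelope L) {x : K} (hx : x ∈ L) : g * bMat x ∈ envelope L := by
  have h : g * bMat x = wMat K * (wMat K * g * wMat K * aMat x) * wMat K := by
    simp only [← wMat_mul_aMat_mul_wMat, ← mul_assoc, wMat_mul_self, one_mul]
  rw [h]
  exact wMat_mul_mul_wMat_mem_envelope
    (mul_aMat_mem_envelope hL (wMat_mul_mul_wMat_mem_envelope hg) hx)

lemma SL2L_subset_envelope (hL : ∀ s t : K, t ∈ L → s ^ 2 * t ∈ L) :
    (SL2L L : Set (SL2 K)) ⊆ envelope L := by
  have hgen : ∀ g ∈ envelope L, ∀ y ∈ setA L ∪ setAop L, g * y ∈ envelope L := by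
    rintro g hg y (⟨x, hx, rfl⟩ | ⟨x, hx, rfl⟩)
    · exact mul_aMat_mem_envelope hL hg hx
    · exact mul_bMat_mem_envelope hL hg hx
  intro g hg
  induction hg using Subgroup.closure_induction_right with
  | one => exact one_mem_envelope
  | mul_right g _ y hy hg => exact hgen g hg y hy
  | mul_inv_cancel g _ y hy hg =>
    have hinv : y⁻¹ = y := by
      rcases hy with ⟨x, _, rfl⟩ | ⟨x, _, rfl⟩
      · exact inv_eq_of_mul_eq_one_right (aMat_mul_self x)
      · exact inv_eq_of_mul_eq_one_right (bMat_mul_self x)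
    rw [hinv]
    exact hgen g hg y hy

end Envelope

section Generators

variable {L : AddSubgroup K}

lemma inv_mem_of_sq_mul_mem (hL : ∀ s t : K, t ∈ L → s ^ 2 * t ∈ L) {t : K} (ht : t ∈ L) :
    t⁻¹ ∈ L := by
  rcases eq_or_ne t 0 with rfl | h0
  · simp
  · simpa [sq, mul_assoc, h0] using hL t⁻¹ t ht

lemma aMat_mem_SL2L {t : K} (ht : t ∈ L) : aMat t ∈ SL2L L :=
  Subgroup.subset_closure (Or.inl ⟨t, ht, rfl⟩)

lemma bMat_mem_SL2L {t : K} (ht : t ∈ L) : bMat t ∈ SL2L L :=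
  Subgroup.subset_closure (Or.inr ⟨t, ht, rfl⟩)

lemma diagMat_mem_SL2L [CharP K 2] (hL : ∀ s t : K, t ∈ L → s ^ 2 * t ∈ L) (h1 : (1 : K) ∈ L)
    {s : Kˣ} (hs : s ∈ Tgen L) : diagMat s ∈ SL2L L := by
  suffices Tgen L ≤ (SL2L L).comap diagHom from this hs
  refine Subgroup.closure_le _ |>.2 fun u (hu : (u : K) ∈ L) => ?_
  have hn : ∀ t ∈ L, aMat t * bMat t⁻¹ * aMat t ∈ SL2L L := fun t ht =>
    mul_mem (mul_mem (aMat_mem_SL2L ht) (bMat_mem_SL2L (inv_mem_of_sq_mul_mem hL ht)))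
      (aMat_mem_SL2L ht)
  show diagMat u ∈ SL2L L
  rw [diagMat_eq_aMat_bMat]
  simpa using mul_mem (hn _ hu) (hn 1 h1)

end Generators

theorem centralizers_in_SL2L_general
    [CharP K 2] (L : AddSubgroup K) (hsq : ∀ x : K, x ^ 2 ∈ L)
    (hvs : ∀ s t : K, t ∈ L → s ^ 2 * t ∈ L) :
    (∀ t : K, t ∈ L → t ≠ 0 →
        {g : SL2 K | g ∈ SL2L L ∧ g * aMat t = aMat t * g} = setA L) ∧
      ∀ s : Kˣ, s ∈ Tgen L → s ≠ 1 →
        {g : SL2 K | g ∈ SL2L L ∧ g * diagMat s = diagMat s * g} = setTL L := by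
  refine ⟨fun t _ ht0 => Set.ext fun g => ⟨?_, ?_⟩, fun s _ hs1 => Set.ext fun g => ⟨?_, ?_⟩⟩
  · rintro ⟨hg, hcomm⟩
    rw [eq_aMat_of_commute ht0 hcomm] at hg ⊢
    exact ⟨_, mem_of_aMat_mem_envelope (SL2L_subset_envelope hvs hg), rfl⟩
  · rintro ⟨u, hu, rfl⟩
    exact ⟨aMat_mem_SL2L hu, by rw [aMat_mul_aMat, aMat_mul_aMat, add_comm]⟩
  · rintro ⟨hg, hcomm⟩
    have hs : (s : K) ^ 2 ≠ 1 := by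
      rwa [← one_pow 2, Ne, CharTwo.sq_inj, ← Units.val_one, Units.val_inj]
    obtain ⟨u, rfl⟩ := eq_diagMat_of_commute hs hcomm
    exact ⟨u, mem_Tgen_of_diagMat_mem_envelope (SL2L_subset_envelope hvs hg), rfl⟩
  · rintro ⟨u, hu, rfl⟩
    exact ⟨diagMat_mem_SL2L hvs (by simpa using hsq 1) hu, (Commute.all u s).map diagHom⟩

/-- In `SL₂(L)` the root group and the torus are self-centralizing on nontrivial
elements: for nonzero `t ∈ L` the centralizer of `a(t)` in `SL₂(L)` is `A`, and for
`s ≠ 1` in the subgroup of `Kˣ` generated by `L \ {0}` the centralizer of `diag(s)`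
in `SL₂(L)` is `T(L)`. -/
theorem centralizers_in_SL2L
    [CharP K 2] (himperf : ¬ Function.Surjective fun x : K => x ^ 2)
    (L : AddSubgroup K) (hsq : ∀ x : K, x ^ 2 ∈ L)
    (hvs : ∀ s t : K, t ∈ L → s ^ 2 * t ∈ L) :
    (∀ t : K, t ∈ L → t ≠ 0 →
        {g : SL2 K | g ∈ SL2L L ∧ g * aMat t = aMat t * g} = setA L) ∧
      ∀ s : Kˣ, s ∈ Tgen L → s ≠ 1 →
        {g : SL2 K | g ∈ SL2L L ∧ g * diagMat s = diagMat s * g} = setTL L :=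
  centralizers_in_SL2L_general L hsq hvs

end
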